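/- arXiv:2210.00486 — 7 statements merged into one kernel-verified Lean document; each statement's English description precedes it below -/
import Mathlib

section
/- Let R be a commutative ring, ι a finite index set, and c : ι → R. Suppose x_i, v_i, h_i ∈ R (for i ∈ ι) and x, y, u, v ∈ R satisfy Σ_i c i * x_i = x, Σ_i c i * v_i = v, and Σ_i c i * h_i = u * v. Define e := x + u and f := y + v. Then Σ_i c i * (x_i * f − v_i * e + h_i) = x * y; i.e., the locally computed output shares of the secure multiplication protocol reconstruct to the product x·y. -/
open Finset

theorem sum_mul_mul_sub_mul_add {R ι : Type*} [Ring R] [Fintype ι] (c a b d : ι → R) (f e : R) :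
    ∑ i, c i * (a i * f - b i * e + d i)
      = (∑ i, c i * a i) * f - (∑ i, c i * b i) * e + ∑ i, c i * d i := by
  simp only [sum_mul, ← sum_sub_distrib, ← sum_add_distrib, mul_add, mul_sub, mul_assoc]

theorem mul_add_sub_mul_add_add_mul {R : Type*} [CommRing R] (x y u v : R) :
    x * (y + v) - v * (x + u) + u * v = x * y := by
  ring

/-- Correctness of secure multiplication with a multiplication triplet
`(u, v, h)`, `h = u·v`: if the shares `xs`, `vs`, `hs` reconstruct (via the
coefficients `c`) to `x`, `v` and `u*v` respectively, then the locally computed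
output shares `xs i * f − vs i * e + hs i` (with `e = x + u`, `f = y + v`)
reconstruct to the product `x * y`. -/
theorem secure_mul_correct {R : Type*} [CommRing R] {ι : Type*} [Fintype ι]
    (c xs vs hs : ι → R) (x y u v : R)
    (hx : ∑ i, c i * xs i = x)
    (hv : ∑ i, c i * vs i = v)
    (hh : ∑ i, c i * hs i = u * v)
    (e f : R) (he : e = x + u) (hf : f = y + v) :
    ∑ i, c i * (xs i * f - vs i * e + hs i) = x * y := by
  rw [sum_mul_mul_sub_mul_add, hx, hv, hh, he, hf]
  exact mul_add_sub_mul_add_add_mul x y u v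
end

section
/- Let R be a commutative ring, ι a finite index set, c : ι → R, and n, d, m natural numbers. Suppose X_i (n×d), V_i (d×m), H_i (n×m) are matrices over R for i ∈ ι, and X, U are n×d matrices and Y, V are d×m matrices over R, satisfying Σ_i c i • X_i = X, Σ_i c i • V_i = V, and Σ_i c i • H_i = U ⬝ V. Define E := X + U and F := Y + V. Then Σ_i c i • (X_i ⬝ F − E ⬝ V_i + H_i) = X ⬝ Y. -/
/-! The reconstruction map `A ↦ ∑ i, c i • A i` is linear and commutes with multiplication by a
fixed public matrix on either side, so the shares reconstruct to `X * F - E * V + U * V`; expanding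
`E = X + U` and `F = Y + V`, the masking terms `X * V` and `U * V` cancel. -/

namespace Matrix

variable {R ι l n p : Type*} [Fintype n]

theorem sum_smul_mul [Semiring R] (s : Finset ι) (c : ι → R) (A : ι → Matrix l n R)
    (B : Matrix n p R) : ∑ i ∈ s, c i • (A i * B) = (∑ i ∈ s, c i • A i) * B := by
  simp only [Matrix.sum_mul, Matrix.smul_mul]

theorem sum_smul_mul_left [CommSemiring R] (s : Finset ι) (c : ι → R) (B : Matrix l n R)
    (A : ι → Matrix n p R) : ∑ i ∈ s, c i • (B * A i) = B * ∑ i ∈ s, c i • A i := by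
  simp only [Matrix.mul_sum, Matrix.mul_smul]

theorem mul_add_sub_add_mul_add_mul [Ring R] (X U : Matrix l n R) (Y V : Matrix n p R) :
    X * (Y + V) - (X + U) * V + U * V = X * Y := by
  simp only [Matrix.mul_add, Matrix.add_mul]
  abel

end Matrix

/-- Correctness of secure matrix multiplication with a matrix multiplication
triplet `(U, V, H)`, `H = U ⬝ V`: if the matrix shares `Xs`, `Vs`, `Hs`
reconstruct (via the coefficients `c`) to `X`, `V` and `U ⬝ V` respectively,
then the locally computed output shares `Xs i ⬝ F − E ⬝ Vs i + Hs i`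
(with `E = X + U`, `F = Y + V`) reconstruct to the product `X ⬝ Y`. -/
theorem secure_matrix_mul_correct {R : Type*} [CommRing R] {ι : Type*} [Fintype ι]
    (c : ι → R) {n d m : ℕ}
    (Xs : ι → Matrix (Fin n) (Fin d) R)
    (Vs : ι → Matrix (Fin d) (Fin m) R)
    (Hs : ι → Matrix (Fin n) (Fin m) R)
    (X U : Matrix (Fin n) (Fin d) R) (Y V : Matrix (Fin d) (Fin m) R)
    (hX : ∑ i, c i • Xs i = X)
    (hV : ∑ i, c i • Vs i = V)
    (hH : ∑ i, c i • Hs i = U * V)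
    (E : Matrix (Fin n) (Fin d) R) (F : Matrix (Fin d) (Fin m) R)
    (hE : E = X + U) (hF : F = Y + V) :
    ∑ i, c i • (Xs i * F - E * Vs i + Hs i) = X * Y := by
  calc ∑ i, c i • (Xs i * F - E * Vs i + Hs i)
      = (∑ i, c i • Xs i) * F - E * ∑ i, c i • Vs i + ∑ i, c i • Hs i := by
        simp only [smul_add, smul_sub, Finset.sum_add_distrib, Finset.sum_sub_distrib,
          Matrix.sum_smul_mul, Matrix.sum_smul_mul_left]
    _ = X * (Y + V) - (X + U) * V + U * V := by rw [hX, hV, hH, hE, hF]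
    _ = X * Y := Matrix.mul_add_sub_add_mul_add_mul X U Y V
end

section
/- Fix ℓ ≥ 1 and work in (ZMod (2^ℓ))³ with Φ(1) = (1,1,−1) and Φ(2) = (2,2,−3). There do not exist b₁, b₂ ∈ ZMod (2^ℓ) such that b₁•Φ(1) + b₂•Φ(2) = (1,0,0). Consequently, the two assistant parties cannot reconstruct a vector-space-shared secret even if they collude. -/
/-!
The first two coordinates of `Φ(1)` agree, and so do those of `Φ(2)`; hence they agree for every
linear combination of the two, whereas `(1,0,0)` has coordinates `1 ≠ 0` there, since
`ZMod (2^ℓ)` is nontrivial for `ℓ ≥ 1`.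
-/

theorem smul_add_smul_apply_eq {R M ι : Type*} [Semiring R] [AddCommMonoid M] [Module R M]
    {u w : ι → M} {i j : ι} (hu : u i = u j) (hw : w i = w j) (a b : R) :
    (a • u + b • w) i = (a • u + b • w) j := by
  simp only [Pi.add_apply, Pi.smul_apply, hu, hw]

/-- The two assistant parties cannot reconstruct: `(1,0,0)` is not a linear
combination of `Φ(1) = (1,1,−1)` and `Φ(2) = (2,2,−3)` over `ZMod (2^ℓ)`. -/
theorem pMPL_assistants_cannot_reconstruct (ℓ : ℕ) (hℓ : 1 ≤ ℓ) :
    ¬ ∃ b₁ b₂ : ZMod (2^ℓ),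
        b₁ • (![1, 1, -1] : Fin 3 → ZMod (2^ℓ))
          + b₂ • (![2, 2, -3] : Fin 3 → ZMod (2^ℓ)) = ![1, 0, 0] := by
  rintro ⟨b₁, b₂, h⟩
  have : Fact (1 < 2 ^ ℓ) := ⟨Nat.one_lt_two_pow (by omega)⟩
  have h01 := smul_add_smul_apply_eq (u := (![1, 1, -1] : Fin 3 → ZMod (2^ℓ)))
    (w := ![2, 2, -3]) (i := 0) (j := 1) rfl rfl b₁ b₂
  rw [h] at h01
  exact one_ne_zero h01
end

section
/- Fix ℓ ≥ 1 and work in (ZMod (2^ℓ))³ with Φ(0) = (1,0,1) and Φ(3) = (3,3,−4). There do not exist b₀, b₃ ∈ ZMod (2^ℓ) such that b₀•Φ(0) + b₃•Φ(3) = (1,0,0). Consequently, the privileged party alone (holding Φ(0) and the alternate vector Φ(3)) cannot reconstruct a vector-space-shared secret. -/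
theorem not_exists_smul_add_smul_eq_of_isUnit_three {R : Type*} [Ring R] [Nontrivial R]
    (h3 : IsUnit (3 : R)) :
    ¬ ∃ b₀ b₃ : R, b₀ • (![1, 0, 1] : Fin 3 → R) + b₃ • ![3, 3, -4] = ![1, 0, 0] := by
  rintro ⟨b₀, b₃, h⟩
  have h₀ : b₀ + b₃ * 3 = 1 := by simpa using congrFun h 0
  have h₁ : b₃ * 3 = 0 := by simpa using congrFun h 1
  have h₂ : b₀ - b₃ * 4 = 0 := by simpa [sub_eq_add_neg] using congrFun h 2
  have hb₃ : b₃ = 0 := h3.mul_left_eq_zero.mp h₁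
  simp only [hb₃, zero_mul, add_zero, sub_zero] at h₀ h₂
  exact one_ne_zero (h₀.symm.trans h₂)

theorem ZMod.isUnit_three_two_pow (ℓ : ℕ) : IsUnit (3 : ZMod (2 ^ ℓ)) := by
  exact_mod_cast (ZMod.isUnit_iff_coprime 3 (2 ^ ℓ)).mpr (Nat.Coprime.pow_right _ (by decide))

/-- The privileged party alone cannot reconstruct: `(1,0,0)` is not a linear
combination of `Φ(0) = (1,0,1)` and the alternate vector `Φ(3) = (3,3,−4)`
over `ZMod (2^ℓ)`. -/
theorem pMPL_privileged_alone_cannot_reconstruct (ℓ : ℕ) (hℓ : 1 ≤ ℓ) :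
    ¬ ∃ b₀ b₃ : ZMod (2^ℓ),
        b₀ • (![1, 0, 1] : Fin 3 → ZMod (2^ℓ))
          + b₃ • (![3, 3, -4] : Fin 3 → ZMod (2^ℓ)) = ![1, 0, 0] := by
  have : Fact (1 < 2 ^ ℓ) := ⟨Nat.one_lt_two_pow (by omega)⟩
  exact not_exists_smul_add_smul_eq_of_isUnit_three (ZMod.isUnit_three_two_pow ℓ)
end

section
/- Fix ℓ ≥ 1 and x ∈ ZMod (2^ℓ). The map ψ_x : (ZMod (2^ℓ))² → (ZMod (2^ℓ))² defined by ψ_x(s₁, s₂) = (x + s₁ − s₂, 2x + 2s₁ − 3s₂) is a bijection. Hence, when the randomness (s₁, s₂) of the sharing protocol is uniformly distributed, the joint distribution of the shares (⟨x⟩₁, ⟨x⟩₂) seen by the two assistant parties is uniform on (ZMod (2^ℓ))² and in particular is independent of the secret x. -/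
/-- The pair of shares `(⟨x⟩₁, ⟨x⟩₂)` of the assistant parties as a function of the sharing
randomness `(s₁, s₂)`. Its linear part `!![1, -1; 2, -3]` has determinant `-1`, so it is
invertible over every ring, with inverse `(p₁, p₂) ↦ (3p₁ - p₂ - x, 2p₁ - p₂)`. -/
def assistantSharesEquiv {R : Type*} [Ring R] (x : R) : R × R ≃ R × R where
  toFun s := (x + s.1 - s.2, 2 * x + 2 * s.1 - 3 * s.2)
  invFun p := (3 * p.1 - p.2 - x, 2 * p.1 - p.2)
  left_inv s := Prod.ext (by noncomm_ring) (by noncomm_ring)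
  right_inv p := Prod.ext (by noncomm_ring) (by noncomm_ring)

theorem pMPL_assistant_shares_bijective_general (ℓ : ℕ) (x : ZMod (2^ℓ)) :
    Function.Bijective
      (fun s : ZMod (2^ℓ) × ZMod (2^ℓ) =>
        ((x + s.1 - s.2, 2*x + 2*s.1 - 3*s.2) : ZMod (2^ℓ) × ZMod (2^ℓ))) :=
  (assistantSharesEquiv x).bijective

/-- Privacy against colluding assistant parties: for every secret `x`, the map
sending the sharing randomness `(s₁, s₂)` to the pair of shares
`(⟨x⟩₁, ⟨x⟩₂) = (x + s₁ − s₂, 2x + 2s₁ − 3s₂)` is a bijection on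
`(ZMod (2^ℓ))²`, hence uniform randomness yields uniformly distributed shares
independent of `x`. -/
theorem pMPL_assistant_shares_bijective (ℓ : ℕ) (hℓ : 1 ≤ ℓ) (x : ZMod (2^ℓ)) :
    Function.Bijective
      (fun s : ZMod (2^ℓ) × ZMod (2^ℓ) =>
        ((x + s.1 - s.2, 2*x + 2*s.1 - 3*s.2) : ZMod (2^ℓ) × ZMod (2^ℓ))) :=
  pMPL_assistant_shares_bijective_general ℓ x
end

section
/- Fix ℓ ≥ 1 and x ∈ ZMod (2^ℓ). The map ψ_x : (ZMod (2^ℓ))² → (ZMod (2^ℓ))² defined by ψ_x(s₁, s₂) = (x + s₂, 3x + 3s₁ − 4s₂) is a bijection. Hence, when the randomness (s₁, s₂) of the sharing protocol is uniformly distributed, the joint distribution of the shares (⟨x⟩₀, ⟨x⟩₃) held by the privileged party is uniform on (ZMod (2^ℓ))² and in particular is independent of the secret x. -/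
theorem bijective_triangular_affine {R : Type*} [CommRing R] (u : Rˣ) (c d x : R) :
    Function.Bijective (fun s : R × R => ((x + s.2, c * x + u * s.1 - d * s.2) : R × R)) := by
  refine Function.bijective_iff_has_inverse.mpr
    ⟨fun t => (↑u⁻¹ * (t.2 - c * x + d * (t.1 - x)), t.1 - x), fun s => ?_, fun t => ?_⟩
  · ext
    · calc (↑u⁻¹ * (c * x + u * s.1 - d * s.2 - c * x + d * (x + s.2 - x)) : R)
          = ↑u⁻¹ * u * s.1 := by ring
        _ = s.1 := by rw [u.inv_mul, one_mul]
    · simp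
  · ext
    · simp
    · calc (c * x + u * (↑u⁻¹ * (t.2 - c * x + d * (t.1 - x))) - d * (t.1 - x) : R)
          = c * x + u * ↑u⁻¹ * (t.2 - c * x + d * (t.1 - x)) - d * (t.1 - x) := by ring
        _ = t.2 := by rw [u.mul_inv]; ring

theorem pMPL_privileged_shares_bijective_general (ℓ : ℕ) (x : ZMod (2^ℓ)) :
    Function.Bijective
      (fun s : ZMod (2^ℓ) × ZMod (2^ℓ) =>
        ((x + s.2, 3*x + 3*s.1 - 4*s.2) : ZMod (2^ℓ) × ZMod (2^ℓ))) :=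
  bijective_triangular_affine (ZMod.isUnit_three_two_pow ℓ).unit 3 4 x

/-- Privacy against the privileged party: for every secret `x`, the map
sending the sharing randomness `(s₁, s₂)` to the pair of shares
`(⟨x⟩₀, ⟨x⟩₃) = (x + s₂, 3x + 3s₁ − 4s₂)` is a bijection on
`(ZMod (2^ℓ))²`, hence uniform randomness yields uniformly distributed shares
independent of `x`. -/
theorem pMPL_privileged_shares_bijective (ℓ : ℕ) (hℓ : 1 ≤ ℓ) (x : ZMod (2^ℓ)) :
    Function.Bijective
      (fun s : ZMod (2^ℓ) × ZMod (2^ℓ) =>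
        ((x + s.2, 3*x + 3*s.1 - 4*s.2) : ZMod (2^ℓ) × ZMod (2^ℓ))) :=
  pMPL_privileged_shares_bijective_general ℓ x
end

section
/- Fix ℓ ≥ 1 and work in (ZMod (2^ℓ))⁵. With Φ(1) = (−1,1,0,1,3), Φ(2) = (1,1,1,0,1), Φ(3) = (0,0,0,2,3), Φ(4) = (0,0,0,1,2), Φ(5) = (0,2,1,4,9), there do not exist a₁,…,a₅ ∈ ZMod (2^ℓ) with a₁•Φ(1) + a₂•Φ(2) + a₃•Φ(3) + a₄•Φ(4) + a₅•Φ(5) = (1,0,0,0,0). Consequently, the four assistant parties together with the alternate vector — i.e., everything except the privileged party's own vector Φ(0) — cannot reconstruct a shared secret. -/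
/-!
The functional `x ↦ 2 x₂ - x₀ - x₁` vanishes on `Φ(1), …, Φ(5)` but takes the value `-1` on
`(1,0,0,0,0)`; so a combination of the `Φ(i)` equal to `(1,0,0,0,0)` forces `1 = 0`, which is
impossible in `ZMod (2^ℓ)` once `ℓ ≥ 1`.
-/

theorem pMPL5_not_exists_combination_eq_single {R : Type*} [CommRing R] [Nontrivial R] :
    ¬ ∃ a₁ a₂ a₃ a₄ a₅ : R,
        a₁ • (![-1, 1, 0, 1, 3] : Fin 5 → R)
          + a₂ • (![1, 1, 1, 0, 1] : Fin 5 → R)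
          + a₃ • (![0, 0, 0, 2, 3] : Fin 5 → R)
          + a₄ • (![0, 0, 0, 1, 2] : Fin 5 → R)
          + a₅ • (![0, 2, 1, 4, 9] : Fin 5 → R) = ![1, 0, 0, 0, 0] := by
  rintro ⟨a₁, a₂, a₃, a₄, a₅, h⟩
  have h₀ : -a₁ + a₂ = 1 := by simpa using congrFun h 0
  have h₁ : a₁ + a₂ + a₅ * 2 = 0 := by simpa using congrFun h 1
  have h₂ : a₂ + a₅ = 0 := by simpa using congrFun h 2
  exact one_ne_zero (by linear_combination 2 * h₂ - h₀ - h₁ : (1 : R) = 0)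

/-- In the five-party extension of pMPL over `ZMod (2^ℓ)`, the four assistant
parties together with the alternate vector cannot reconstruct:
`(1,0,0,0,0)` is not a linear combination of `Φ(1) = (−1,1,0,1,3)`,
`Φ(2) = (1,1,1,0,1)`, `Φ(3) = (0,0,0,2,3)`, `Φ(4) = (0,0,0,1,2)`,
`Φ(5) = (0,2,1,4,9)`. -/
theorem pMPL5_assistants_cannot_reconstruct (ℓ : ℕ) (hℓ : 1 ≤ ℓ) :
    ¬ ∃ a₁ a₂ a₃ a₄ a₅ : ZMod (2^ℓ),
        a₁ • (![-1, 1, 0, 1, 3] : Fin 5 → ZMod (2^ℓ))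
          + a₂ • (![1, 1, 1, 0, 1] : Fin 5 → ZMod (2^ℓ))
          + a₃ • (![0, 0, 0, 2, 3] : Fin 5 → ZMod (2^ℓ))
          + a₄ • (![0, 0, 0, 1, 2] : Fin 5 → ZMod (2^ℓ))
          + a₅ • (![0, 2, 1, 4, 9] : Fin 5 → ZMod (2^ℓ)) = ![1, 0, 0, 0, 0] := by
  have : Fact (1 < 2 ^ ℓ) := ⟨Nat.one_lt_two_pow (by omega)⟩
  exact pMPL5_not_exists_combination_eq_single
end
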